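/- arXiv:2111.07208 — 2 statements merged into one kernel-verified Lean document; each statement's English description precedes it below -/
import Mathlib

section
/- For every triple of real numbers (a,b,c) ≠ (0,0,0) and all complex α, β, the three-tangle of the state α·v₁ + β·w₁ is zero; likewise, the three-tangle of α·v₂ + β·w₂ is zero. That is, every state in the two-dimensional invariant subspaces V₁ and V₂ has vanishing distributed entanglement τ = 0. -/
open Matrix Complex

noncomputable section

/-- Index type for three qubits: `(ℂ²)^{⊗3} ≅ ℂ⁸` with basis `|jkl⟩`. -/
abbrev Q3 := Fin 2 × Fin 2 × Fin 2

/-- Pauli matrix σx. -/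
def sx : Matrix (Fin 2) (Fin 2) ℂ := !![0, 1; 1, 0]
/-- Pauli matrix σy. -/
def sy : Matrix (Fin 2) (Fin 2) ℂ := !![0, I; -I, 0]
/-- Pauli matrix σz. -/
def sz : Matrix (Fin 2) (Fin 2) ℂ := !![1, 0; 0, -1]

/-- Tensor (Kronecker) product of three 2×2 matrices, as an 8×8 matrix. -/
def tens3 (A B C : Matrix (Fin 2) (Fin 2) ℂ) : Matrix Q3 Q3 ℂ :=
  fun p q => A p.1 q.1 * B p.2.1 q.2.1 * C p.2.2 q.2.2

/-- Computational basis vector `|jkl⟩`. -/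
def ket (j k l : Fin 2) : Q3 → ℂ := fun p => if p = (j, k, l) then 1 else 0

/-- φ₀ = |000⟩. -/
def phi0 : Q3 → ℂ := ket 0 0 0
/-- φ₁ = |100⟩+|010⟩+|001⟩. -/
def phi1 : Q3 → ℂ := ket 1 0 0 + ket 0 1 0 + ket 0 0 1
/-- φ₂ = |110⟩+|011⟩+|101⟩. -/
def phi2 : Q3 → ℂ := ket 1 1 0 + ket 0 1 1 + ket 1 0 1
/-- φ₃ = |111⟩. -/
def phi3 : Q3 → ℂ := ket 1 1 1

/-- λ = 2√(3a²+3b²+3c²+3bc). -/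
def lam (a b c : ℝ) : ℝ := 2 * Real.sqrt (3*a^2 + 3*b^2 + 3*c^2 + 3*b*c)

def x2 (a b c : ℝ) : ℂ := (5/3 : ℂ) * (lam a b c : ℝ) - 6*(b:ℂ) - 2*I*(a:ℂ) - 2*(c:ℂ)
def x3 (a b c : ℝ) : ℂ := -((lam a b c : ℝ) : ℂ)/3 + 6*I*(a:ℂ) - 4*(c:ℂ) + 2*(b:ℂ)
def x5 (a b c : ℝ) : ℂ := -(x2 a b c + x3 a b c)
def x4 (a b c : ℝ) : ℂ := (5/3 : ℂ) * (lam a b c : ℝ) - 6*(c:ℂ) + 2*I*(a:ℂ) - 2*(b:ℂ)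
def x6 (a b c : ℝ) : ℂ := -((lam a b c : ℝ) : ℂ)/3 - 6*I*(a:ℂ) - 4*(b:ℂ) + 2*(c:ℂ)
def x7 (a b c : ℝ) : ℂ := -(x4 a b c + x6 a b c)

/-- v₁ = x₂|001⟩ + x₃|010⟩ + x₅|100⟩. -/
def v1 (a b c : ℝ) : Q3 → ℂ := x2 a b c • ket 0 0 1 + x3 a b c • ket 0 1 0 + x5 a b c • ket 1 0 0
/-- w₁ = x₄|011⟩ + x₆|101⟩ + x₇|110⟩. -/
def w1 (a b c : ℝ) : Q3 → ℂ := x4 a b c • ket 0 1 1 + x6 a b c • ket 1 0 1 + x7 a b c • ket 1 1 0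

def y2 (a b c : ℝ) : ℂ := (5/3 : ℂ) * (lam a b c : ℝ) + 6*(b:ℂ) + 2*I*(a:ℂ) + 2*(c:ℂ)
def y3 (a b c : ℝ) : ℂ := -((lam a b c : ℝ) : ℂ)/3 - 6*I*(a:ℂ) + 4*(c:ℂ) - 2*(b:ℂ)
def y5 (a b c : ℝ) : ℂ := -(y2 a b c + y3 a b c)
def y4 (a b c : ℝ) : ℂ := (5/3 : ℂ) * (lam a b c : ℝ) + 6*(c:ℂ) - 2*I*(a:ℂ) + 2*(b:ℂ)
def y6 (a b c : ℝ) : ℂ := -((lam a b c : ℝ) : ℂ)/3 + 6*I*(a:ℂ) + 4*(b:ℂ) - 2*(c:ℂ)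
def y7 (a b c : ℝ) : ℂ := -(y4 a b c + y6 a b c)

/-- v₂ = y₂|001⟩ + y₃|010⟩ + y₅|100⟩. -/
def v2 (a b c : ℝ) : Q3 → ℂ := y2 a b c • ket 0 0 1 + y3 a b c • ket 0 1 0 + y5 a b c • ket 1 0 0
/-- w₂ = y₄|011⟩ + y₆|101⟩ + y₇|110⟩. -/
def w2 (a b c : ℝ) : Q3 → ℂ := y4 a b c • ket 0 1 1 + y6 a b c • ket 1 0 1 + y7 a b c • ket 1 1 0

/-- The three-tangle (distributed entanglement) τ of a three-qubit pure state with
computational-basis coefficients t_{ijk} = ψ(i,j,k):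
τ = 4|t₀₀₀²t₁₁₁² + t₀₀₁²t₁₁₀² + t₀₁₀²t₁₀₁² + t₁₀₀²t₀₁₁² − 2d₁ + 4d₂|. -/
def tau (ψ : Q3 → ℂ) : ℝ :=
  4 * ‖(
    (ψ (0,0,0))^2 * (ψ (1,1,1))^2 + (ψ (0,0,1))^2 * (ψ (1,1,0))^2
    + (ψ (0,1,0))^2 * (ψ (1,0,1))^2 + (ψ (1,0,0))^2 * (ψ (0,1,1))^2
    - 2 * (ψ (0,0,0) * ψ (1,1,1) * ψ (0,1,1) * ψ (1,0,0)
         + ψ (0,0,0) * ψ (1,1,1) * ψ (1,0,1) * ψ (0,1,0)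
         + ψ (0,0,0) * ψ (1,1,1) * ψ (1,1,0) * ψ (0,0,1)
         + ψ (0,1,1) * ψ (1,0,0) * ψ (1,0,1) * ψ (0,1,0)
         + ψ (0,1,1) * ψ (1,0,0) * ψ (1,1,0) * ψ (0,0,1)
         + ψ (1,0,1) * ψ (0,1,0) * ψ (1,1,0) * ψ (0,0,1))
    + 4 * (ψ (0,0,0) * ψ (1,1,0) * ψ (1,0,1) * ψ (0,1,1)
         + ψ (1,1,1) * ψ (0,0,1) * ψ (0,1,0) * ψ (1,0,0)))‖

/-!
On states with `t₀₀₀ = t₁₁₁ = 0` the three-tangle only sees the products `t₀₀₁t₁₁₀`,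
`t₀₁₀t₁₀₁`, `t₁₀₀t₀₁₁`, through the Heron form `u² + v² + w² − 2(uv + vw + wu)`. For
`α v₁ + β w₁` this is `α²β²` times the Heron form of `(x₂x₇, x₃x₆, x₅x₄)`, a polynomial in
`λ, a, b, c, i` that vanishes modulo `λ² = 12(a² + b² + c² + bc)` and `i² = −1`. Since `λ` is even
in `(a, b, c)`, the pair `(v₂, w₂)` is `(v₁, w₁)` at `(−a, −b, −c)`.
-/

/-- For squares `u, v, w` of the sides of a triangle, `-heron u v w` is sixteen times the
squared area. -/
def heron (u v w : ℂ) : ℂ := u ^ 2 + v ^ 2 + w ^ 2 - 2 * (u * v + v * w + w * u)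

theorem tau_smul_add_smul (α β p₁ p₂ p₃ q₁ q₂ q₃ : ℂ) :
    tau (α • (p₁ • ket 0 0 1 + p₂ • ket 0 1 0 + p₃ • ket 1 0 0) +
        β • (q₁ • ket 0 1 1 + q₂ • ket 1 0 1 + q₃ • ket 1 1 0)) =
      4 * ‖α ^ 2 * β ^ 2 * heron (p₁ * q₃) (p₂ * q₂) (p₃ * q₁)‖ := by
  rw [tau]
  congr 2
  simp only [smul_add, Pi.add_apply, Pi.smul_apply, smul_eq_mul, ket, Prod.mk.injEq, heron]
  norm_num
  ring

theorem lam_sq (a b c : ℝ) : lam a b c ^ 2 = 12 * (a ^ 2 + b ^ 2 + c ^ 2 + b * c) := by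
  have hrad : 0 ≤ 3 * a ^ 2 + 3 * b ^ 2 + 3 * c ^ 2 + 3 * b * c := by
    nlinarith [sq_nonneg (b + c), sq_nonneg a]
  rw [lam, mul_pow, Real.sq_sqrt hrad]
  ring

theorem lam_neg (a b c : ℝ) : lam (-a) (-b) (-c) = lam a b c := by
  simp only [lam, neg_sq, mul_neg, neg_mul, neg_neg]

theorem heron_x_eq_zero (a b c : ℝ) :
    heron (x2 a b c * x7 a b c) (x3 a b c * x6 a b c) (x5 a b c * x4 a b c) = 0 := by
  have hlam : ((lam a b c : ℝ) : ℂ) ^ 2 = 12 * ((a : ℂ) ^ 2 + b ^ 2 + c ^ 2 + b * c) := by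
    exact_mod_cast lam_sq a b c
  set S : ℂ := (a : ℂ) ^ 2 + b ^ 2 + c ^ 2 + b * c
  simp only [heron, x7, x5, x2, x3, x4, x6]
  linear_combination (((lam a b c : ℝ) : ℂ) ^ 2 - 12 * S) * hlam
    + (24 * (a : ℂ) ^ 2 * (((lam a b c : ℝ) : ℂ) ^ 2 - 12 * S) + 144 * (a : ℂ) ^ 4 * (1 + I ^ 2))
      * I_sq

theorem v2_eq_v1_neg (a b c : ℝ) : v2 a b c = v1 (-a) (-b) (-c) := by
  simp only [v2, v1, y2, y3, y5, x2, x3, x5, lam_neg, ofReal_neg]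
  congr 3 <;> ring

theorem w2_eq_w1_neg (a b c : ℝ) : w2 a b c = w1 (-a) (-b) (-c) := by
  simp only [w2, w1, y4, y6, y7, x4, x6, x7, lam_neg, ofReal_neg]
  congr 3 <;> ring

theorem tau_v1_w1_eq_zero (a b c : ℝ) (α β : ℂ) : tau (α • v1 a b c + β • w1 a b c) = 0 := by
  rw [v1, w1, tau_smul_add_smul, heron_x_eq_zero, mul_zero, norm_zero, mul_zero]

theorem statement13_general (a b c : ℝ) (α β : ℂ) :
    tau (α • v1 a b c + β • w1 a b c) = 0 ∧
    tau (α • v2 a b c + β • w2 a b c) = 0 := by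
  rw [v2_eq_v1_neg, w2_eq_w1_neg]
  exact ⟨tau_v1_w1_eq_zero a b c α β, tau_v1_w1_eq_zero (-a) (-b) (-c) α β⟩

/-- for (a,b,c) ≠ (0,0,0) and all complex α, β, the three-tangle of
α·v₁ + β·w₁ and of α·v₂ + β·w₂ is zero: every state in the two-dimensional invariant
subspaces V₁ and V₂ has vanishing distributed entanglement. -/
theorem statement13 (a b c : ℝ) (habc : (a, b, c) ≠ (0, 0, 0)) (α β : ℂ) :
    tau (α • v1 a b c + β • w1 a b c) = 0 ∧
    tau (α • v2 a b c + β • w2 a b c) = 0 :=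
  statement13_general a b c α β
end
end

section
/- For every nonzero state ψ := c₀φ₀ + c₁φ₁ + c₂φ₂ + c₃φ₃ in the symmetric sector of three qubits, there exist X ∈ SU(2), a real phase γ, and complex coefficients c₀', c₁', c₂' with c₀' and c₂' real, such that (X⊗X⊗X)ψ = e^{iγ}(c₀'φ₀ + c₁'φ₁ + c₂'φ₂). That is, up to a local symmetric special unitary transformation and a global phase, every symmetric three-qubit state can be put in a form with c₃ = 0 and c₀, c₂ real. -/
open Matrix Complex

noncomputable section

/-!
On the symmetric sector, `X ⊗ X ⊗ X` acts on the coefficients `(c₀, c₁, c₂, c₃)` as `X` acts by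
substitution on the binary cubic form `c₀ x³ + 3c₁ x²y + 3c₂ xy² + c₃ y³`. Since ℂ is algebraically
closed this form has a zero `(u, v)` with `|u|² + |v|² = 1`, and the element of SU(2) with second
row `(u, v)` makes the new `c₃` vanish. The diagonal element `diag(a, ā)` with `a = e^{iθ}` then
multiplies the coefficients by `a³, a, ā, ā³`; taking `4θ = arg c₂ - arg c₀` gives `c₀` and `c₂`
the same phase, which is pulled out as the global phase.
-/

open ComplexConjugate

def symState (c0 c1 c2 c3 : ℂ) : Q3 → ℂ := c0 • phi0 + c1 • phi1 + c2 • phi2 + c3 • phi3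

lemma tens3_mul (A B C A' B' C' : Matrix (Fin 2) (Fin 2) ℂ) :
    tens3 (A * A') (B * B') (C * C') = tens3 A B C * tens3 A' B' C' := by
  ext p q
  simp only [tens3, mul_apply, Fintype.sum_prod_type, Fin.sum_univ_two]
  ring

lemma tens3_mulVec_symState (a b c d c0 c1 c2 c3 : ℂ) :
    tens3 !![a, b; c, d] !![a, b; c, d] !![a, b; c, d] *ᵥ symState c0 c1 c2 c3 =
      symState (a^3*c0 + 3*a^2*b*c1 + 3*a*b^2*c2 + b^3*c3)
        (a^2*c*c0 + (a^2*d + 2*a*b*c)*c1 + (2*a*b*d + b^2*c)*c2 + b^2*d*c3)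
        (a*c^2*c0 + (2*a*c*d + b*c^2)*c1 + (a*d^2 + 2*b*c*d)*c2 + b*d^2*c3)
        (c^3*c0 + 3*c^2*d*c1 + 3*c*d^2*c2 + d^3*c3) := by
  ext ⟨j, k, l⟩
  fin_cases j <;> fin_cases k <;> fin_cases l <;>
    simp only [tens3, symState, phi0, phi1, phi2, phi3, ket, mulVec, dotProduct,
      Fintype.sum_prod_type, Fin.sum_univ_two, Fin.isValue, Fin.zero_eta, Fin.mk_one, of_apply,
      cons_val', cons_val_fin_one, cons_val_zero, cons_val_one, Pi.add_apply, Pi.smul_apply,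
      smul_eq_mul, smul_add, mul_ite, mul_one, mul_zero, Prod.mk.injEq, and_true, and_false,
      and_self, zero_ne_one, one_ne_zero, ↓reduceIte, add_zero, zero_add] <;> ring

lemma tens3_diagonal_mulVec_symState (a d c0 c1 c2 c3 : ℂ) :
    tens3 !![a, 0; 0, d] !![a, 0; 0, d] !![a, 0; 0, d] *ᵥ symState c0 c1 c2 c3 =
      symState (a^3*c0) (a^2*d*c1) (a*d^2*c2) (d^3*c3) := by
  simp [tens3_mulVec_symState]

lemma mem_specialUnitaryGroup_of_normSq_add_eq_one {u v : ℂ} (h : normSq u + normSq v = 1) :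
    !![conj v, -conj u; u, v] ∈ specialUnitaryGroup (Fin 2) ℂ := by
  have h' : u * conj u + v * conj v = 1 := by
    simpa only [mul_conj, ← ofReal_add, ofReal_one] using congrArg ((↑) : ℝ → ℂ) h
  refine mem_specialUnitaryGroup_iff.mpr ⟨mem_unitaryGroup_iff.mpr ?_, ?_⟩
  · ext i j
    fin_cases i <;> fin_cases j <;>
      simp [mul_apply, Fin.sum_univ_two, one_apply, star_eq_conjTranspose, Complex.star_def,
        -RCLike.star_def] <;>
      first | linear_combination h' | ring
  · simp only [det_fin_two_of]
    linear_combination h'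

lemma exists_ne_zero_cubicForm_eq_zero (c0 c1 c2 c3 : ℂ) :
    ∃ u v : ℂ, (u, v) ≠ 0 ∧ u^3*c0 + 3*u^2*v*c1 + 3*u*v^2*c2 + v^3*c3 = 0 := by
  by_cases hc0 : c0 = 0
  · exact ⟨1, 0, by simp, by simp [hc0]⟩
  open Polynomial in
  obtain ⟨t, ht⟩ := Complex.exists_root
    (f := C c0 * X^3 + C (3*c1) * X^2 + C (3*c2) * X + C c3)
    (by rw [degree_cubic hc0]; decide)
  refine ⟨t, 1, by simp, ?_⟩
  simp only [IsRoot, eval_add, eval_mul, eval_C, eval_pow, eval_X] at ht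
  linear_combination ht

lemma exists_mul_normSq_add_eq_one {u v : ℂ} (h : (u, v) ≠ 0) :
    ∃ s : ℂ, normSq (s * u) + normSq (s * v) = 1 := by
  have hpos : 0 < normSq u + normSq v := by
    contrapose! h
    have hu := normSq_nonneg u
    have hv := normSq_nonneg v
    simp only [Prod.mk_eq_zero, ← normSq_eq_zero]
    constructor <;> linarith
  refine ⟨(√(normSq u + normSq v) : ℂ)⁻¹, ?_⟩
  simp only [normSq_mul, map_inv₀, normSq_ofReal, Real.mul_self_sqrt hpos.le]
  field_simp

lemma exists_normSq_add_eq_one_cubicForm_eq_zero (c0 c1 c2 c3 : ℂ) :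
    ∃ u v : ℂ, normSq u + normSq v = 1 ∧ u^3*c0 + 3*u^2*v*c1 + 3*u*v^2*c2 + v^3*c3 = 0 := by
  obtain ⟨u, v, huv, hzero⟩ := exists_ne_zero_cubicForm_eq_zero c0 c1 c2 c3
  obtain ⟨s, hs⟩ := exists_mul_normSq_add_eq_one huv
  exact ⟨s * u, s * v, hs, by linear_combination s^3 * hzero⟩

lemma exists_phase_alignment (x0 x2 : ℂ) :
    ∃ a : ℂ, normSq a = 1 ∧ ∃ γ : ℝ,
      a^3 * x0 = exp (γ * I) * ‖x0‖ ∧ conj a * x2 = exp (γ * I) * ‖x2‖ := by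
  set θ := (arg x2 - arg x0) / 4
  have hθ0 : exp (θ * I) ^ 3 * exp (arg x0 * I) = exp ((3 * θ + arg x0 : ℝ) * I) := by
    rw [← exp_nat_mul, ← exp_add]
    push_cast
    ring_nf
  have hθ2 : conj (exp (θ * I)) * exp (arg x2 * I) = exp ((3 * θ + arg x0 : ℝ) * I) := by
    rw [← exp_conj, ← exp_add]
    congr 1
    simp only [map_mul, conj_ofReal, conj_I, θ]
    push_cast
    ring
  refine ⟨exp (θ * I), by simp [normSq_eq_norm_sq], 3 * θ + arg x0, ?_, ?_⟩
  · linear_combination -(exp (θ * I) ^ 3) * norm_mul_exp_arg_mul_I x0 + ‖x0‖ * hθ0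
  · linear_combination -conj (exp (θ * I)) * norm_mul_exp_arg_mul_I x2 + ‖x2‖ * hθ2

theorem statement19_general (c0 c1 c2 c3 : ℂ) :
    ∃ X ∈ Matrix.specialUnitaryGroup (Fin 2) ℂ,
      ∃ (γ : ℝ) (c0' c2' : ℝ) (c1' : ℂ),
        (tens3 X X X).mulVec (c0 • phi0 + c1 • phi1 + c2 • phi2 + c3 • phi3) =
          Complex.exp (Complex.I * (γ : ℂ)) •
            ((c0' : ℂ) • phi0 + c1' • phi1 + (c2' : ℂ) • phi2) := by
  obtain ⟨u, v, huv, hzero⟩ := exists_normSq_add_eq_one_cubicForm_eq_zero c0 c1 c2 c3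
  set Y := !![conj v, -conj u; u, v]
  obtain ⟨x0, x1, x2, hY⟩ :
      ∃ x0 x1 x2, tens3 Y Y Y *ᵥ symState c0 c1 c2 c3 = symState x0 x1 x2 0 :=
    ⟨_, _, _, by rw [tens3_mulVec_symState, hzero]⟩
  obtain ⟨a, ha, γ, hx0, hx2⟩ := exists_phase_alignment x0 x2
  have hD : !![a, 0; 0, conj a] ∈ specialUnitaryGroup (Fin 2) ℂ := by
    simpa using mem_specialUnitaryGroup_of_normSq_add_eq_one (u := 0) (v := conj a)
      (by simpa using ha)
  refine ⟨!![a, 0; 0, conj a] * Y, mul_mem hD (mem_specialUnitaryGroup_of_normSq_add_eq_one huv),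
    γ, ‖x0‖, ‖x2‖, (exp (γ * I))⁻¹ * (a * x1), ?_⟩
  have hunit : a * conj a = 1 := by rw [mul_conj, ha, ofReal_one]
  have hx1 : a ^ 2 * conj a * x1 = exp (γ * I) * ((exp (γ * I))⁻¹ * (a * x1)) := by
    rw [mul_inv_cancel_left₀ (exp_ne_zero _)]
    linear_combination a * x1 * hunit
  have hx2' : a * conj a ^ 2 * x2 = exp (γ * I) * ‖x2‖ := by
    linear_combination conj a * x2 * hunit + hx2
  change _ *ᵥ symState c0 c1 c2 c3 = _
  rw [tens3_mul, ← mulVec_mulVec, hY, tens3_diagonal_mulVec_symState, hx0, hx1, hx2', mul_comm I]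
  simp only [symState, mul_zero, zero_smul, add_zero, smul_add, smul_smul]

/-- every nonzero symmetric-sector state can be brought, by a local
symmetric special unitary transformation X⊗X⊗X (X ∈ SU(2)) and up to a global phase
e^{iγ}, to the form c₀'φ₀ + c₁'φ₁ + c₂'φ₂ with c₃ = 0 and c₀', c₂' real. -/
theorem statement19 (c0 c1 c2 c3 : ℂ)
    (hne : c0 • phi0 + c1 • phi1 + c2 • phi2 + c3 • phi3 ≠ 0) :
    ∃ X ∈ Matrix.specialUnitaryGroup (Fin 2) ℂ,
      ∃ (γ : ℝ) (c0' c2' : ℝ) (c1' : ℂ),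
        (tens3 X X X).mulVec (c0 • phi0 + c1 • phi1 + c2 • phi2 + c3 • phi3) =
          Complex.exp (Complex.I * (γ : ℂ)) •
            ((c0' : ℂ) • phi0 + c1' • phi1 + (c2' : ℂ) • phi2) :=
  statement19_general c0 c1 c2 c3
end
end
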